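/- Let P be a flow-based polytope whose edge set E is connected when viewed as a set of undirected edges, and suppose there exists x ∈ P with x_e ∈ (0,1) for all e ∈ E. Then for EVERY root r ∈ [n] there exist a vertex f of P and a directed tree T with all edges in E such that Flip_f(T) is an arborescence rooted at r. -/

import Mathlib

open Finset

open scoped Classical

/-- The set `E₀` of non-loop directed edges on vertex set `Fin n`. -/
def E0 (n : ℕ) : Finset (Fin n × Fin n) :=
  Finset.univ.filter (fun e => e.1 ≠ e.2)

/-- The reverse of a directed edge. -/
def rev {n : ℕ} (e : Fin n × Fin n) : Fin n × Fin n := (e.2, e.1)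

/-- The underlying undirected (simple) graph of a set of directed edges. -/
def undirGraph (n : ℕ) (D : Finset (Fin n × Fin n)) : SimpleGraph (Fin n) where
  Adj u v := u ≠ v ∧ ((u, v) ∈ D ∨ (v, u) ∈ D)
  symm := ⟨fun u v h => ⟨h.1.symm, h.2.symm⟩⟩
  loopless := ⟨fun u h => h.1 rfl⟩

/-- There is a directed walk from `i` to `j` using only edges in `D`. -/
def reachesIn (n : ℕ) (D : Finset (Fin n × Fin n)) (i j : Fin n) : Prop :=
  Relation.ReflTransGen (fun a b => (a, b) ∈ D) i j

/-- `T` is a directed tree: `n-1` non-loop directed edges whose underlying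
undirected edges form a spanning tree of `Fin n`. -/
def IsDirTree (n : ℕ) (T : Finset (Fin n × Fin n)) : Prop :=
  T ⊆ E0 n ∧ T.card = n - 1 ∧ (undirGraph n T).Connected

/-- `A` is an arborescence rooted at `r`: a directed tree such that from every
vertex there is a directed walk to `r` using only edges of `A`. -/
def IsArb (n : ℕ) (r : Fin n) (A : Finset (Fin n × Fin n)) : Prop :=
  IsDirTree n A ∧ ∀ v : Fin n, reachesIn n A v r

/-- `Flip_f` of a single edge: reverse the edge iff `f e = 1`. -/
noncomputable def flipEdge (n : ℕ) (f : Fin n × Fin n → ℝ) (e : Fin n × Fin n) :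
    Fin n × Fin n :=
  if f e = 1 then rev e else e

/-- `Flip_f` of a set of edges. -/
noncomputable def flipSet (n : ℕ) (f : Fin n × Fin n → ℝ)
    (T : Finset (Fin n × Fin n)) : Finset (Fin n × Fin n) :=
  T.image (flipEdge n f)

/-- Membership in the flow-based polytope with variable edge set `E` and
demands `d` (points are extended by zero outside `E`). -/
def memFlowPolytope (n : ℕ) (E : Finset (Fin n × Fin n)) (d : Fin n → ℤ)
    (x : Fin n × Fin n → ℝ) : Prop :=
  (∀ e, e ∉ E → x e = 0) ∧ (∀ e ∈ E, x e ∈ Set.Icc (0 : ℝ) 1) ∧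
    ∀ v : Fin n, (∑ i, x (v, i)) - (∑ i, x (i, v)) = (d v : ℝ)

/-- A vertex of the flow-based polytope: a 0/1 point of the polytope. -/
def IsVertex (n : ℕ) (E : Finset (Fin n × Fin n)) (d : Fin n → ℤ)
    (f : Fin n × Fin n → ℝ) : Prop :=
  memFlowPolytope n E d f ∧ ∀ e ∈ E, f e = 0 ∨ f e = 1

/-- The 0/1 indicator of a set of edges. -/
def ind (n : ℕ) (S : Finset (Fin n × Fin n)) : Fin n × Fin n → ℝ :=
  fun e => if e ∈ S then 1 else 0

/-- The vertices of the flow-based polytope, encoded by their supports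
(sets of edges carrying flow `1`). -/
noncomputable def flowVertices (n : ℕ) (E : Finset (Fin n × Fin n)) (d : Fin n → ℤ) :
    Finset (Finset (Fin n × Fin n)) :=
  Finset.univ.filter (fun S => S ⊆ E ∧ memFlowPolytope n E d (ind n S))

/-- The polynomial `P_{f,r}(x)` of the Bernoulli factory. Since `f` is 0/1,
`x_e^{f_e}(1-x_e)^{1-f_e}` is `x_e` if `f_e = 1` and `1 - x_e` otherwise, and
`x_e^{1-f_e}(1-x_e)^{f_e}` is `1 - x_e` if `f_e = 1` and `x_e` otherwise. -/
noncomputable def Pfr (n : ℕ) (E : Finset (Fin n × Fin n))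
    (f : Fin n × Fin n → ℝ) (r : Fin n) (x : Fin n × Fin n → ℝ) : ℝ :=
  (∏ e ∈ E, if f e = 1 then x e else 1 - x e) *
    ∑ T ∈ Finset.univ.filter
        (fun T : Finset (Fin n × Fin n) =>
          IsDirTree n T ∧ T ⊆ E ∧ IsArb n r (flipSet n f T)),
      ∏ e ∈ T, (if f e = 1 then 1 - x e else x e)

/-- Membership in the circulation hyperplane `Circ̄`. -/
def memCircBar (n : ℕ) (y : Fin n × Fin n → ℝ) : Prop :=
  ∀ v : Fin n,
    (∑ i ∈ Finset.univ.filter (fun i => i ≠ v), y (v, i)) -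
      (∑ i ∈ Finset.univ.filter (fun i => i ≠ v), y (i, v)) = 0

/-- The arborescence-generating polynomial `SArb_r(y)`. -/
noncomputable def SArb (n : ℕ) (r : Fin n) (y : Fin n × Fin n → ℝ) : ℝ :=
  ∑ A ∈ Finset.univ.filter (fun A : Finset (Fin n × Fin n) => IsArb n r A),
    ∏ e ∈ A, y e

/-- The map `M_f`: `M_f(x)_e = x_e (1 - f_e) + (1 - x_ē) f_ē`. -/
def Mf (n : ℕ) (f x : Fin n × Fin n → ℝ) : Fin n × Fin n → ℝ :=
  fun e => x e * (1 - f e) + (1 - x (rev e)) * f (rev e)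

/-!
Fix a point `x ∈ P` with all `x_e ∈ (0,1)` and any vertex `f` of `P`. Then `y = f - x` is a
circulation whose support is exactly `E`: positive where `f_e = 1`, negative where `f_e = 0`.
Hence `Flip_f(E)` orients every edge of `E` against the flow of `y`. If the set `U` of vertices
that cannot reach `r` in `Flip_f(E)` were nonempty, no flipped edge would enter `Uᶜ` from `U`,
so `y` could only flow out of `U`; having net flow zero, it would vanish on the cut, which
contradicts the connectivity of `E`. So every vertex reaches `r`, and a spanning in-tree of
`Flip_f(E)` grown from `r` pulls back to the directed tree `T ⊆ E`.

Vertices exist because an extreme point of the compact set `P` is integral: its fractional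
edges meet every vertex zero times or at least twice (the demands are integers), so by
counting they carry a nonzero circulation, and moving `x` both ways along it stays in `P`.
-/

section NetFlow

variable {α : Type*} [Fintype α]

def netFlow : (α × α → ℝ) →ₗ[ℝ] α → ℝ where
  toFun y v := ∑ i, y (v, i) - ∑ i, y (i, v)
  map_add' y z := by
    ext v
    simp only [Pi.add_apply, Finset.sum_add_distrib]
    ring
  map_smul' c y := by
    ext v
    simp only [Pi.smul_apply, smul_eq_mul, RingHom.id_apply, ← Finset.mul_sum]
    ring

theorem netFlow_apply (y : α × α → ℝ) (v : α) :
    netFlow y v = ∑ i, y (v, i) - ∑ i, y (i, v) := rfl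

variable [DecidableEq α]

theorem sum_netFlow_eq_sum_compl (y : α × α → ℝ) (S : Finset α) :
    ∑ v ∈ S, netFlow y v = ∑ v ∈ S, ∑ w ∈ Sᶜ, (y (v, w) - y (w, v)) := by
  have hsplit : ∀ v, netFlow y v =
      ∑ w ∈ S, (y (v, w) - y (w, v)) + ∑ w ∈ Sᶜ, (y (v, w) - y (w, v)) := by
    intro v
    rw [Finset.sum_add_sum_compl, Finset.sum_sub_distrib, netFlow_apply]
  have hinner : ∑ v ∈ S, ∑ w ∈ S, (y (v, w) - y (w, v)) = 0 := by
    simp only [Finset.sum_sub_distrib]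
    rw [Finset.sum_comm, sub_self]
  simp only [hsplit, Finset.sum_add_distrib, hinner, zero_add]

theorem sum_netFlow (y : α × α → ℝ) : ∑ v, netFlow y v = 0 := by
  rw [sum_netFlow_eq_sum_compl, Finset.compl_univ]
  simp only [Finset.sum_empty, Finset.sum_const_zero]

theorem netFlow_single (e : α × α) (c : ℝ) (v : α) :
    netFlow (Pi.single e c) v = (if e.1 = v then c else 0) - (if e.2 = v then c else 0) := by
  obtain ⟨a, b⟩ := e
  simp only [netFlow_apply, Pi.single_apply, Prod.ext_iff, ite_and, Finset.sum_ite_irrel,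
    Finset.sum_ite_eq', Finset.mem_univ, if_true, Finset.sum_const_zero]
  simp only [@eq_comm _ v]

theorem reflTransGen_of_netFlow_eq_zero {y : α × α → ℝ} (hy : netFlow y = 0)
    {rel : α → α → Prop} (hpos : ∀ a b, 0 < y (a, b) → rel b a)
    (hneg : ∀ a b, y (a, b) < 0 → rel a b) {G : SimpleGraph α} (hG : G.Connected)
    (hsupp : ∀ a b, G.Adj a b → y (a, b) ≠ 0 ∨ y (b, a) ≠ 0) (u v : α) :
    Relation.ReflTransGen rel u v := by
  set S : Finset α := Finset.univ.filter (fun a => Relation.ReflTransGen rel a v)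
  have hS : ∀ a, a ∈ S ↔ Relation.ReflTransGen rel a v := by simp [S]
  -- No `rel`-edge runs from `Sᶜ` into `S`, so across the cut `y` only flows from `Sᶜ` to `S`;
  -- as the net flow out of `Sᶜ` is zero, `y` vanishes on the cut.
  have hclosed : ∀ a b, G.Adj a b → b ∈ S → a ∈ S := by
    intro a b hab hb
    by_contra ha
    have hcross : ∀ pq ∈ Sᶜ ×ˢ S, 0 ≤ y pq ∧ y (pq.2, pq.1) ≤ 0 := by
      rintro ⟨p, q⟩ hpq
      simp only [Finset.mem_product, Finset.mem_compl, hS] at hpq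
      exact ⟨not_lt.1 fun h => hpq.1 (.head (hneg p q h) hpq.2),
        not_lt.1 fun h => hpq.1 (.head (hpos q p h) hpq.2)⟩
    have hcut := sum_netFlow_eq_sum_compl y Sᶜ
    rw [compl_compl, ← Finset.sum_product' (f := fun p q => y (p, q) - y (q, p))] at hcut
    simp only [hy, Pi.zero_apply, Finset.sum_const_zero] at hcut
    have hab_mem : (a, b) ∈ Sᶜ ×ˢ S := Finset.mem_product.2 ⟨Finset.mem_compl.2 ha, hb⟩
    have hzero := (Finset.sum_eq_zero_iff_of_nonneg fun pq hpq =>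
      sub_nonneg.2 ((hcross pq hpq).2.trans (hcross pq hpq).1)).1 hcut.symm _ hab_mem
    obtain ⟨h1, h2⟩ := hcross _ hab_mem
    rcases hsupp a b hab with h | h <;> exact h (by simp only at hzero h1 h2; linarith)
  have hreach : G.Reachable u v := hG.preconnected u v
  rw [SimpleGraph.reachable_iff_reflTransGen] at hreach
  suffices u ∈ S by rwa [hS] at this
  induction hreach using Relation.ReflTransGen.head_induction_on with
  | refl => exact (hS v).2 .refl
  | head hab _ ih => exact hclosed _ _ hab ih

theorem card_le_of_card_incident_ne_one {F : Finset (α × α)} (hloop : ∀ e ∈ F, e.1 ≠ e.2)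
    (hdeg : ∀ v, (F.filter fun e => e.1 = v ∨ e.2 = v).card ≠ 1) :
    (Finset.univ.filter fun v => ∃ e ∈ F, e.1 = v ∨ e.2 = v).card ≤ F.card := by
  set W := Finset.univ.filter fun v => ∃ e ∈ F, e.1 = v ∨ e.2 = v
  have hends : ∀ e ∈ F, (Finset.univ.filter fun v => e.1 = v ∨ e.2 = v).card = 2 := by
    intro e he
    rw [show (Finset.univ.filter fun v => e.1 = v ∨ e.2 = v) = {e.1, e.2} by ext; simp [eq_comm],
      Finset.card_pair (hloop e he)]
  have hdouble := Finset.sum_card_bipartiteAbove_eq_sum_card_bipartiteBelow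
    (s := Finset.univ) (t := F) (r := fun v e => e.1 = v ∨ e.2 = v)
  simp only [Finset.bipartiteAbove, Finset.bipartiteBelow] at hdouble
  rw [Finset.sum_congr rfl hends, Finset.sum_const, smul_eq_mul] at hdouble
  have hW : ∀ v ∈ W, 2 ≤ (F.filter fun e => e.1 = v ∨ e.2 = v).card := by
    intro v hv
    obtain ⟨e, he, hev⟩ := (Finset.mem_filter.1 hv).2
    have hpos : 0 < (F.filter fun e => e.1 = v ∨ e.2 = v).card :=
      Finset.card_pos.2 ⟨e, Finset.mem_filter.2 ⟨he, hev⟩⟩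
    have := hdeg v
    omega
  have := calc W.card * 2 = ∑ v ∈ W, 2 := by rw [Finset.sum_const, smul_eq_mul]
    _ ≤ ∑ v ∈ W, (F.filter fun e => e.1 = v ∨ e.2 = v).card := Finset.sum_le_sum hW
    _ ≤ ∑ v, (F.filter fun e => e.1 = v ∨ e.2 = v).card :=
      Finset.sum_le_sum_of_subset (Finset.subset_univ W)
  omega

theorem exists_netFlow_eq_zero_of_card_incident_ne_one {F : Finset (α × α)}
    (hloop : ∀ e ∈ F, e.1 ≠ e.2) (hF : F.Nonempty)
    (hdeg : ∀ v, (F.filter fun e => e.1 = v ∨ e.2 = v).card ≠ 1) :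
    ∃ σ : α × α → ℝ, σ ≠ 0 ∧ (∀ e ∉ F, σ e = 0) ∧ netFlow σ = 0 := by
  set W := Finset.univ.filter fun v => ∃ e ∈ F, e.1 = v ∨ e.2 = v
  obtain ⟨w₀, hw₀⟩ : W.Nonempty := by
    obtain ⟨e, he⟩ := hF
    exact ⟨e.1, Finset.mem_filter.2 ⟨Finset.mem_univ _, e, he, Or.inl rfl⟩⟩
  -- The net flow at `w₀` is determined by the others, so `|W| - 1 < |F|` constraints remain.
  let D := LinearMap.funLeft ℝ ℝ ((↑) : W.erase w₀ → α) ∘ₗ netFlow ∘ₗ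
    Function.ExtendByZero.linearMap ℝ ((↑) : F → α × α)
  have hker : LinearMap.ker D ≠ ⊥ := by
    apply LinearMap.ker_ne_bot_of_finrank_lt
    simp only [Module.finrank_fintype_fun_eq_card, Fintype.card_coe,
      Finset.card_erase_of_mem hw₀]
    have hWF : W.card ≤ F.card := card_le_of_card_incident_ne_one hloop hdeg
    have hW : 0 < W.card := Finset.card_pos.2 ⟨w₀, hw₀⟩
    omega
  obtain ⟨τ, hτ, hτ0⟩ := Submodule.exists_mem_ne_zero_of_ne_bot hker
  set σ := Function.extend ((↑) : F → α × α) τ 0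
  have hσF : ∀ e ∉ F, σ e = 0 := fun e he => Function.extend_apply' _ _ _ (by simpa)
  have hσ_ne : σ ≠ 0 := by
    obtain ⟨e, he⟩ := Function.ne_iff.1 hτ0
    exact Function.ne_iff.2 ⟨e, by simpa [σ, Subtype.val_injective.extend_apply] using he⟩
  have hσ_outside : ∀ v ∉ W, netFlow σ v = 0 := by
    intro v hv
    simp only [W, Finset.mem_filter, Finset.mem_univ, true_and, not_exists, not_and] at hv
    rw [netFlow_apply, Finset.sum_eq_zero fun i _ => hσF _ fun h => hv _ h (Or.inl rfl),
      Finset.sum_eq_zero fun i _ => hσF _ fun h => hv _ h (Or.inr rfl), sub_zero]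
  have hσ_ne_w₀ : ∀ v ≠ w₀, netFlow σ v = 0 := by
    intro v hv
    by_cases hvW : v ∈ W
    · exact congrFun (LinearMap.mem_ker.1 hτ) ⟨v, Finset.mem_erase.2 ⟨hv, hvW⟩⟩
    · exact hσ_outside v hvW
  refine ⟨σ, hσ_ne, hσF, funext fun v => ?_⟩
  by_cases hv : v = w₀
  · have := sum_netFlow σ
    rwa [Finset.sum_eq_single w₀ (fun b _ hb => hσ_ne_w₀ b hb) (by simp), ← hv] at this
  · exact hσ_ne_w₀ v hv

end NetFlow

section InTree

variable {α : Type*} [DecidableEq α]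

def IsInTreeOn (R : Finset (α × α)) (r : α) (S : Finset α) (A : Finset (α × α)) : Prop :=
  A ⊆ R ∧ r ∈ S ∧ (∀ a ∈ A, a.1 ∈ S) ∧ A.card + 1 = S.card ∧
    ∀ v ∈ S, Relation.ReflTransGen (fun a b => (a, b) ∈ A) v r

theorem IsInTreeOn.extend {R : Finset (α × α)} {r : α} {S : Finset α} {A : Finset (α × α)}
    (h : IsInTreeOn R r S A) {a c : α} (hac : (a, c) ∈ R) (ha : a ∉ S) (hc : c ∈ S) :
    IsInTreeOn R r (insert a S) (insert (a, c) A) := by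
  obtain ⟨hAR, hr, hsrc, hcard, hreach⟩ := h
  have hmono : ∀ v, Relation.ReflTransGen (fun a b => (a, b) ∈ A) v r →
      Relation.ReflTransGen (fun a' b => (a', b) ∈ insert (a, c) A) v r :=
    fun _ => Relation.ReflTransGen.mono (fun _ _ => Finset.mem_insert_of_mem) _ _
  refine ⟨Finset.insert_subset hac hAR, Finset.mem_insert_of_mem hr, ?_, ?_, ?_⟩
  · intro e he
    rcases Finset.mem_insert.1 he with rfl | he
    · exact Finset.mem_insert_self _ _
    · exact Finset.mem_insert_of_mem (hsrc e he)
  · rw [Finset.card_insert_of_notMem fun h => ha (hsrc _ h), Finset.card_insert_of_notMem ha,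
      hcard]
  · simp only [Finset.forall_mem_insert]
    exact ⟨.head (Finset.mem_insert_self _ _) (hmono c (hreach c hc)),
      fun v hv => hmono v (hreach v hv)⟩

theorem exists_subset_card_add_one_reflTransGen [Fintype α] (R : Finset (α × α)) (r : α)
    (hR : ∀ v, Relation.ReflTransGen (fun a b => (a, b) ∈ R) v r) :
    ∃ A ⊆ R, A.card + 1 = Fintype.card α ∧
      ∀ v, Relation.ReflTransGen (fun a b => (a, b) ∈ A) v r := by
  obtain ⟨⟨S, A⟩, hSA, hmax⟩ := Finset.exists_max_image
    (Finset.univ.filter fun SA : Finset α × Finset (α × α) => IsInTreeOn R r SA.1 SA.2)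
    (fun SA => SA.1.card) ⟨({r}, ∅), by simp [IsInTreeOn, Relation.ReflTransGen.refl]⟩
  simp only [Finset.mem_filter, Finset.mem_univ, true_and, Prod.forall] at hSA hmax
  have hS : ∀ v, v ∈ S := by
    intro v
    induction hR v using Relation.ReflTransGen.head_induction_on with
    | refl => exact hSA.2.1
    | @head a c hac _ hc =>
      by_contra ha
      have := hmax _ _ (hSA.extend hac ha hc)
      rw [Finset.card_insert_of_notMem ha] at this
      omega
  obtain ⟨hAR, -, -, hcard, hreach⟩ := hSA
  refine ⟨A, hAR, ?_, fun v => hreach v (hS v)⟩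
  rw [hcard, Finset.eq_univ_of_forall hS, Finset.card_univ]

end InTree

theorem mem_E0 {n : ℕ} {e : Fin n × Fin n} : e ∈ E0 n ↔ e.1 ≠ e.2 := by
  simp [E0]

theorem notMem_Ioo_of_mem_bot {a : ℝ} (ha : a ∈ (⊥ : Subring ℝ)) : a ∉ Set.Ioo 0 1 := by
  obtain ⟨m, rfl⟩ := Subring.mem_bot.1 ha
  rintro ⟨h0, h1⟩
  have : (0 : ℤ) < m := by exact_mod_cast h0
  have : m < 1 := by exact_mod_cast h1
  omega

theorem mem_bot_of_memFlowPolytope {n : ℕ} {E : Finset (Fin n × Fin n)} {d : Fin n → ℤ}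
    {x : Fin n × Fin n → ℝ} (hx : memFlowPolytope n E d x) {p : Fin n × Fin n}
    (hp : p ∈ E → x p ∉ Set.Ioo 0 1) : x p ∈ (⊥ : Subring ℝ) := by
  by_cases hpE : p ∈ E
  · obtain ⟨h0, h1⟩ := hx.2.1 p hpE
    rcases h0.eq_or_lt with h0 | h0
    · rw [← h0]; exact zero_mem _
    rcases h1.eq_or_lt with h1 | h1
    · rw [h1]; exact one_mem _
    exact absurd ⟨h0, h1⟩ (hp hpE)
  · rw [hx.1 p hpE]; exact zero_mem _

theorem card_incident_fractional_ne_one {n : ℕ} {E : Finset (Fin n × Fin n)} (hE : E ⊆ E0 n)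
    {d : Fin n → ℤ} {x : Fin n × Fin n → ℝ} (hx : memFlowPolytope n E d x) (v : Fin n) :
    ((E.filter fun e => x e ∈ Set.Ioo 0 1).filter fun e => e.1 = v ∨ e.2 = v).card ≠ 1 := by
  intro h
  obtain ⟨e, he⟩ := Finset.card_eq_one.1 h
  have hmem : ∀ p, p ∈ E ∧ x p ∈ Set.Ioo 0 1 ∧ (p.1 = v ∨ p.2 = v) ↔ p = e := by
    intro p
    simpa [and_assoc] using Finset.ext_iff.1 he p
  obtain ⟨heE, hxe, hev⟩ := (hmem e).2 rfl
  have hrest : netFlow (Function.update x e 0) v ∈ (⊥ : Subring ℝ) := by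
    have hintegral : ∀ p, (p.1 = v ∨ p.2 = v) →
        Function.update x e 0 p ∈ (⊥ : Subring ℝ) := by
      intro p hp
      by_cases hpe : p = e
      · simp [hpe, zero_mem]
      rw [Function.update_of_ne hpe]
      exact mem_bot_of_memFlowPolytope hx fun hpE hxp => hpe ((hmem p).1 ⟨hpE, hxp, hp⟩)
    exact sub_mem (sum_mem fun i _ => hintegral _ (Or.inl rfl))
      (sum_mem fun i _ => hintegral _ (Or.inr rfl))
  have hsplit : x = Function.update x e 0 + Pi.single e (x e) := by
    ext p
    by_cases hp : p = e <;> simp [hp]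
  have hflow : netFlow x v = d v := hx.2.2 v
  rw [hsplit, map_add, Pi.add_apply, netFlow_single] at hflow
  have hd : (d v : ℝ) - netFlow (Function.update x e 0) v ∈ (⊥ : Subring ℝ) :=
    sub_mem (Subring.mem_bot.2 ⟨d v, rfl⟩) hrest
  have hloop : e.1 ≠ e.2 := mem_E0.1 (hE heE)
  refine notMem_Ioo_of_mem_bot ?_ hxe
  rcases hev with hv | hv
  · rw [if_pos hv, if_neg (hv ▸ hloop.symm), sub_zero] at hflow
    rw [show x e = d v - netFlow (Function.update x e 0) v by linarith]
    exact hd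
  · rw [if_neg (hv ▸ hloop), if_pos hv, zero_sub] at hflow
    rw [show x e = -(d v - netFlow (Function.update x e 0) v) by linarith]
    exact neg_mem hd

theorem isCompact_setOf_memFlowPolytope (n : ℕ) (E : Finset (Fin n × Fin n)) (d : Fin n → ℤ) :
    IsCompact {x | memFlowPolytope n E d x} := by
  refine (isCompact_Icc (a := (0 : Fin n × Fin n → ℝ)) (b := 1)).of_isClosed_subset ?_ ?_
  · simp only [memFlowPolytope, Set.ofPred_and, Set.ofPred_forall]
    refine (isClosed_iInter fun e => isClosed_iInter fun _ =>
      isClosed_eq (continuous_apply e) continuous_const).inter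
      ((isClosed_iInter fun e => isClosed_iInter fun _ =>
        isClosed_Icc.preimage (continuous_apply e)).inter
      (isClosed_iInter fun v => isClosed_eq ?_ continuous_const))
    fun_prop
  · intro x hx
    refine ⟨fun e => ?_, fun e => ?_⟩ <;> by_cases he : e ∈ E
    · exact (hx.2.1 e he).1
    · exact (hx.1 e he).ge
    · exact (hx.2.1 e he).2
    · simp [hx.1 e he]

theorem isVertex_of_mem_extremePoints {n : ℕ} {E : Finset (Fin n × Fin n)} (hE : E ⊆ E0 n)
    {d : Fin n → ℤ} {x : Fin n × Fin n → ℝ}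
    (hx : x ∈ {x | memFlowPolytope n E d x}.extremePoints ℝ) : IsVertex n E d x := by
  obtain ⟨hxP, hext⟩ := mem_extremePoints_iff_left.1 hx
  refine ⟨hxP, fun e he => ?_⟩
  by_contra hfrac
  set F := E.filter fun e => x e ∈ Set.Ioo 0 1
  have heF : e ∈ F := by
    obtain ⟨h0, h1⟩ := hxP.2.1 e he
    exact Finset.mem_filter.2 ⟨he, h0.lt_of_ne (by tauto), h1.lt_of_ne (by tauto)⟩
  obtain ⟨σ, hσ0, hσF, hσflow⟩ := exists_netFlow_eq_zero_of_card_incident_ne_one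
    (fun e he => mem_E0.1 (hE (Finset.mem_filter.1 he).1)) ⟨e, heF⟩
    (card_incident_fractional_ne_one hE hxP)
  have hnear : ∀ᶠ t in nhds (0 : ℝ), memFlowPolytope n E d (x + t • σ) := by
    have hF : ∀ᶠ t in nhds (0 : ℝ), ∀ e ∈ F, x e + t * σ e ∈ Set.Ioo 0 1 :=
      (Filter.eventually_all_finset F).2 fun e he =>
        ((continuous_const.add (continuous_id.mul continuous_const)).tendsto' 0 (x e)
          (by simp)).eventually (isOpen_Ioo.mem_nhds (Finset.mem_filter.1 he).2)
    filter_upwards [hF] with t ht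
    refine ⟨fun p hp => ?_, fun p hp => ?_, fun v => ?_⟩
    · simp [hxP.1 p hp, hσF p fun h => hp (Finset.mem_filter.1 h).1]
    · by_cases hpF : p ∈ F
      · exact Set.Ioo_subset_Icc_self (ht p hpF)
      · simpa [hσF p hpF] using hxP.2.1 p hp
    · change netFlow (x + t • σ) v = d v
      rw [map_add, map_smul, hσflow, smul_zero, add_zero]
      exact hxP.2.2 v
  have hsymm : ∀ᶠ t in nhds (0 : ℝ),
      memFlowPolytope n E d (x + t • σ) ∧ memFlowPolytope n E d (x + (-t) • σ) :=
    hnear.and ((continuous_neg.tendsto' 0 0 neg_zero).eventually hnear)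
  obtain ⟨t, ⟨htP, hnegP⟩, ht0⟩ :=
    ((hsymm.filter_mono nhdsWithin_le_nhds).and (self_mem_nhdsWithin (s := {0}ᶜ))).exists
  have hmid : x ∈ openSegment ℝ (x + t • σ) (x + (-t) • σ) :=
    ⟨1 / 2, 1 / 2, by norm_num, by norm_num, by norm_num, by module⟩
  have := hext _ htP _ hnegP hmid
  rw [add_eq_left, smul_eq_zero] at this
  exact this.elim ht0 hσ0

theorem exists_isVertex {n : ℕ} {E : Finset (Fin n × Fin n)} (hE : E ⊆ E0 n) {d : Fin n → ℤ}
    {x : Fin n × Fin n → ℝ} (hx : memFlowPolytope n E d x) : ∃ f, IsVertex n E d f :=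
  let ⟨f, hf⟩ := (isCompact_setOf_memFlowPolytope n E d).extremePoints_nonempty ⟨x, hx⟩
  ⟨f, isVertex_of_mem_extremePoints hE hf⟩

theorem mem_flipSet {n : ℕ} {f : Fin n × Fin n → ℝ} {T : Finset (Fin n × Fin n)}
    {p : Fin n × Fin n} :
    p ∈ flipSet n f T ↔ (p ∈ T ∧ f p ≠ 1) ∨ (rev p ∈ T ∧ f (rev p) = 1) := by
  simp only [flipSet, Finset.mem_image, flipEdge]
  constructor
  · rintro ⟨e, he, rfl⟩
    by_cases h : f e = 1
    · exact Or.inr (by simpa [if_pos h] using ⟨he, h⟩)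
    · exact Or.inl (by simpa [if_neg h] using ⟨he, h⟩)
  · rintro (⟨hp, hf⟩ | ⟨hp, hf⟩)
    · exact ⟨p, hp, if_neg hf⟩
    · exact ⟨rev p, hp, by rw [if_pos hf]; rfl⟩

theorem undirGraph_flipSet (n : ℕ) (f : Fin n × Fin n → ℝ) (T : Finset (Fin n × Fin n)) :
    undirGraph n (flipSet n f T) = undirGraph n T := by
  ext u v
  change (u ≠ v ∧ _) ↔ (u ≠ v ∧ _)
  simp only [mem_flipSet, rev]
  by_cases h₁ : f (u, v) = 1 <;> by_cases h₂ : f (v, u) = 1 <;> simp [h₁, h₂] <;> tauto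

theorem flipSet_subset_E0 {n : ℕ} (f : Fin n × Fin n → ℝ) {T : Finset (Fin n × Fin n)}
    (hT : T ⊆ E0 n) : flipSet n f T ⊆ E0 n := by
  intro p hp
  rcases mem_flipSet.1 hp with ⟨hp, -⟩ | ⟨hp, -⟩
  · exact hT hp
  · exact mem_E0.2 (mem_E0.1 (hT hp)).symm

theorem reachable_of_reachesIn {n : ℕ} {A : Finset (Fin n × Fin n)} {u v : Fin n}
    (h : reachesIn n A u v) : (undirGraph n A).Reachable u v := by
  induction h with
  | refl => rfl
  | @tail b c _ hbc ih =>
    refine ih.trans ?_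
    by_cases hbc' : b = c
    · rw [hbc']
    · exact SimpleGraph.Adj.reachable ⟨hbc', Or.inl hbc⟩

theorem undirGraph_connected_of_reachesIn {n : ℕ} {A : Finset (Fin n × Fin n)} {r : Fin n}
    (h : ∀ v, reachesIn n A v r) : (undirGraph n A).Connected :=
  (SimpleGraph.connected_iff _).2
    ⟨fun u v => (reachable_of_reachesIn (h u)).trans (reachable_of_reachesIn (h v)).symm, ⟨r⟩⟩

theorem exists_subset_flipSet_eq {n : ℕ} {f : Fin n × Fin n → ℝ}
    {E A : Finset (Fin n × Fin n)} (hA : A ⊆ flipSet n f E) :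
    ∃ T ⊆ E, flipSet n f T = A ∧ T.card = A.card := by
  obtain ⟨T, hTE, hinj, hT⟩ := Finset.exists_subset_injOn_image_eq_of_surjOn
    (f := flipEdge n f) (E : Set _) A fun a ha => by
      obtain ⟨e, he, rfl⟩ := Finset.mem_image.1 (hA ha)
      exact ⟨e, he, rfl⟩
  exact ⟨T, Finset.coe_subset.1 hTE, hT, hT ▸ (Finset.card_image_of_injOn hinj).symm⟩

theorem isArb_of_reachesIn {n : ℕ} {A : Finset (Fin n × Fin n)} {r : Fin n} (hA : A ⊆ E0 n)
    (hcard : A.card + 1 = n) (h : ∀ v, reachesIn n A v r) : IsArb n r A :=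
  ⟨⟨hA, by omega, undirGraph_connected_of_reachesIn h⟩, h⟩

theorem reachesIn_flipSet {n : ℕ} {E : Finset (Fin n × Fin n)} {d : Fin n → ℤ}
    (hconn : (undirGraph n E).Connected) {x : Fin n × Fin n → ℝ}
    (hx : memFlowPolytope n E d x) (hxo : ∀ e ∈ E, x e ∈ Set.Ioo 0 1)
    {f : Fin n × Fin n → ℝ} (hf : IsVertex n E d f) (u v : Fin n) :
    reachesIn n (flipSet n f E) u v := by
  have hsign : ∀ e, (e ∈ E ∧ f e = 1 ∧ 0 < (f - x) e) ∨ (e ∈ E ∧ f e ≠ 1 ∧ (f - x) e < 0) ∨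
      (e ∉ E ∧ (f - x) e = 0) := by
    intro e
    by_cases he : e ∈ E
    · obtain ⟨h0, h1⟩ := hxo e he
      rcases hf.2 e he with hfe | hfe <;> simp only [Pi.sub_apply, hfe, he] <;> norm_num <;>
        linarith
    · simp [he, hx.1 e he, hf.1.1 e he]
  refine reflTransGen_of_netFlow_eq_zero (y := f - x) ?_ (fun a b h => ?_) (fun a b h => ?_)
    hconn (fun a b hab => ?_) u v
  · ext w
    rw [map_sub, Pi.sub_apply, Pi.zero_apply, sub_eq_zero]
    exact (hf.1.2.2 w).trans (hx.2.2 w).symm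
  · rcases hsign (a, b) with ⟨he, hfe, -⟩ | ⟨-, -, h'⟩ | ⟨-, h'⟩
    · exact mem_flipSet.2 (Or.inr ⟨he, hfe⟩)
    all_goals linarith
  · rcases hsign (a, b) with ⟨-, -, h'⟩ | ⟨he, hfe, -⟩ | ⟨-, h'⟩
    · linarith
    · exact mem_flipSet.2 (Or.inl ⟨he, hfe⟩)
    · linarith
  · have hne : ∀ e ∈ E, (f - x) e ≠ 0 := fun e he => by
      rcases hsign e with ⟨-, -, h'⟩ | ⟨-, -, h'⟩ | ⟨h', -⟩
      exacts [h'.ne', h'.ne, absurd he h']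
    exact hab.2.imp (hne _) (hne _)

theorem exists_flow_and_tree_every_root_general (n : ℕ)
    (E : Finset (Fin n × Fin n)) (hE : E ⊆ E0 n) (d : Fin n → ℤ)
    (hconn : (undirGraph n E).Connected)
    (hne : ∃ x, memFlowPolytope n E d x ∧ ∀ e ∈ E, x e ∈ Set.Ioo (0 : ℝ) 1) :
    ∀ r : Fin n, ∃ f : Fin n × Fin n → ℝ, IsVertex n E d f ∧
      ∃ T : Finset (Fin n × Fin n), IsDirTree n T ∧ T ⊆ E ∧
        IsArb n r (flipSet n f T) := by
  intro r
  obtain ⟨x, hx, hxo⟩ := hne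
  obtain ⟨f, hf⟩ := exists_isVertex hE hx
  obtain ⟨A, hAE, hcard, hreach⟩ := exists_subset_card_add_one_reflTransGen (flipSet n f E) r
    fun v => reachesIn_flipSet hconn hx hxo hf v r
  rw [Fintype.card_fin] at hcard
  obtain ⟨T, hTE, rfl, hTcard⟩ := exists_subset_flipSet_eq hAE
  have hA : IsArb n r (flipSet n f T) :=
    isArb_of_reachesIn (flipSet_subset_E0 f (hTE.trans hE)) hcard hreach
  refine ⟨f, hf, T, ⟨hTE.trans hE, by omega, ?_⟩, hTE, hA⟩
  rw [← undirGraph_flipSet n f]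
  exact hA.1.2.2

/-- for every root `r` there exist a vertex `f` and a directed
tree `T` in `E` such that `Flip_f(T)` is an arborescence rooted at `r`. -/
theorem exists_flow_and_tree_every_root (n : ℕ) (hn : 2 ≤ n)
    (E : Finset (Fin n × Fin n)) (hE : E ⊆ E0 n) (d : Fin n → ℤ)
    (hconn : (undirGraph n E).Connected)
    (hne : ∃ x, memFlowPolytope n E d x ∧ ∀ e ∈ E, x e ∈ Set.Ioo (0 : ℝ) 1) :
    ∀ r : Fin n, ∃ f : Fin n × Fin n → ℝ, IsVertex n E d f ∧
      ∃ T : Finset (Fin n × Fin n), IsDirTree n T ∧ T ⊆ E ∧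
        IsArb n r (flipSet n f T) :=
  exists_flow_and_tree_every_root_general n E hE d hconn hne
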